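/- Let f be harmonic on a domain Ω ⊆ ℝᵐ (i.e., Δf = 0 componentwise). Then both Ψ₊^{φ,ψ}(f) and Ψ₋^{φ,ψ}(f) are simultaneously harmonic and (φ,ψ)-inframonogenic on Ω. -/

import Mathlib

open CliffordAlgebra

noncomputable section

/-- The quadratic form of `ℝ_{0,m}`: negative definite on `ℝ^m`. -/
abbrev Qf (m : ℕ) : QuadraticForm ℝ (Fin m → ℝ) :=
  QuadraticMap.weightedSumSquares ℝ (fun _ : Fin m => (-1 : ℝ))

/-- The real Clifford algebra `ℝ_{0,m}`. -/
abbrev Cl (m : ℕ) := CliffordAlgebra (Qf m)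

/-- A structural set: an orthonormal basis `ψ¹,…,ψᵐ` of `ℝᵐ`. -/
def IsStructuralSet {m : ℕ} (ψ : Fin m → (Fin m → ℝ)) : Prop :=
  ∀ i j, (∑ t, ψ i t * ψ j t) = if i = j then (1 : ℝ) else 0

/-- The ordered product `ψ_A = ψ^{j₁} ⋯ ψ^{j_k}` for `A = {j₁ < ⋯ < j_k}`. -/
def prodS {m : ℕ} (ψ : Fin m → (Fin m → ℝ)) (A : Finset (Fin m)) : Cl m :=
  ((A.sort (· ≤ ·)).map (fun i => ι (Qf m) (ψ i))).prod

/-- The operator `Ψ_k^{φ,ψ}(a) = Σ_{|A|=k} φ_A a ψ̂_A`. -/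
def PsiK {m : ℕ} (φ ψ : Fin m → (Fin m → ℝ)) (k : ℕ) (a : Cl m) : Cl m :=
  ∑ A ∈ Finset.univ.filter (fun A : Finset (Fin m) => A.card = k),
    prodS φ A * a * reverse (prodS ψ A)

/-- `Ψ₊ = Σ_{k even} Ψ_k`. -/
def PsiPlus {m : ℕ} (φ ψ : Fin m → (Fin m → ℝ)) (a : Cl m) : Cl m :=
  ∑ k ∈ (Finset.range (m + 1)).filter (fun k => Even k), PsiK φ ψ k a

/-- `Ψ₋ = Σ_{k odd} Ψ_k`. -/
def PsiMinus {m : ℕ} (φ ψ : Fin m → (Fin m → ℝ)) (a : Cl m) : Cl m :=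
  ∑ k ∈ (Finset.range (m + 1)).filter (fun k => Odd k), PsiK φ ψ k a

/-- `Ψ₁^{φ,ψ}(a) = Σⱼ φʲ a ψʲ`. -/
def Psi1 {m : ℕ} (φ ψ : Fin m → (Fin m → ℝ)) (a : Cl m) : Cl m :=
  ∑ j, ι (Qf m) (φ j) * a * ι (Qf m) (ψ j)

/-- The standard basis of `ℝᵐ`. -/
def stdB {m : ℕ} (i : Fin m) : Fin m → ℝ := Pi.single i 1

/-- The basis multivector `e_A`. -/
def eA {m : ℕ} (A : Finset (Fin m)) : Cl m := prodS stdB A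

/-- The element with coefficients `c` in the multivector basis. -/
def toCl {m : ℕ} (c : Finset (Fin m) → ℝ) : Cl m := ∑ A, c A • eA A

/-- The space `ℝ_{0,m}^{(k)}` of `k`-grade multivectors. -/
def gradeK (m k : ℕ) : Submodule ℝ (Cl m) :=
  Submodule.span ℝ {x | ∃ A : Finset (Fin m), A.card = k ∧ x = eA A}

/-- Coefficient functions of `ℝ_{0,m}`-valued maps. -/
abbrev Coef (m : ℕ) := Finset (Fin m) → ℝ

/-- The coefficients of the even part `f₊`. -/
def cEven {m : ℕ} (c : Coef m) : Coef m := fun A => if Even A.card then c A else 0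

/-- The coefficients of the odd part `f₋`. -/
def cOdd {m : ℕ} (c : Coef m) : Coef m := fun A => if Odd A.card then c A else 0

/-- The even part of a Clifford number. -/
def evenPart {m : ℕ} (a : Cl m) : Cl m :=
  (DirectSum.decompose (evenOdd (Qf m)) a 0 : evenOdd (Qf m) 0)

/-- The odd part of a Clifford number. -/
def oddPart {m : ℕ} (a : Cl m) : Cl m :=
  (DirectSum.decompose (evenOdd (Qf m)) a 1 : evenOdd (Qf m) 1)

/-- Partial derivative `∂F/∂xᵢ` of a coefficient function. -/
def pd {m : ℕ} (i : Fin m) (F : (Fin m → ℝ) → Coef m) : (Fin m → ℝ) → Coef m :=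
  fun x => fderiv ℝ F x (Pi.single i 1)

/-- The sandwich operator `φ∂[f]ψ∂ = Σᵢⱼ φⁱ (∂²f/∂xᵢ∂xⱼ) ψʲ` for `f = Σ_A F_A e_A`. -/
def sandwichD {m : ℕ} (φ ψ : Fin m → (Fin m → ℝ)) (F : (Fin m → ℝ) → Coef m)
    (x : Fin m → ℝ) : Cl m :=
  ∑ i, ∑ j, ι (Qf m) (φ i) * toCl (pd i (pd j F) x) * ι (Qf m) (ψ j)

/-- The operator `φ∂[ψ∂[f]] = Σᵢⱼ φⁱ ψʲ ∂²f/∂xᵢ∂xⱼ`. -/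
def ddD {m : ℕ} (φ ψ : Fin m → (Fin m → ℝ)) (F : (Fin m → ℝ) → Coef m)
    (x : Fin m → ℝ) : Cl m :=
  ∑ i, ∑ j, ι (Qf m) (φ i) * (ι (Qf m) (ψ j) * toCl (pd i (pd j F) x))

/-- The componentwise Laplacian `Δf = Σᵢ ∂²f/∂xᵢ²`. -/
def lapD {m : ℕ} (F : (Fin m → ℝ) → Coef m) (x : Fin m → ℝ) : Cl m :=
  ∑ i, toCl (pd i (pd i F) x)

/-!
The sign in `ψⁱ ψ_A = ± ψ_{A △ {i}}` depends only on `i` and `A`, not on the structural set, so it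
cancels in `φⁱ (φ_A a ψ̂_A) ψⁱ = φ_{A △ {i}} a ψ̂_{A △ {i}}`. Toggling `i` exchanges even and odd
subsets, hence `φⁱ Ψ₊(a) ψⁱ = Ψ₋(a)` and `φⁱ Ψ₋(a) ψⁱ = Ψ₊(a)`. Writing `ψʲ = -ψⁱ(ψⁱψʲ)` turns
`Σᵢⱼ φⁱ Ψ₊(∂ᵢ∂ⱼf) ψʲ` into `-Σᵢⱼ Ψ₋(∂ᵢ∂ⱼf) ψⁱψʲ`; as the Hessian is symmetric and
`ψⁱψʲ + ψʲψⁱ = -2δᵢⱼ`, this equals `Ψ₋(Δf) = 0`. Harmonicity of `Ψ±(f)` is `Ψ±(Δf) = Ψ±(0) = 0`.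
-/

section Clifford

variable {m : ℕ} {ψ : Fin m → (Fin m → ℝ)}

lemma Qf_apply (x : Fin m → ℝ) : Qf m x = -∑ t, x t * x t := by
  simp [QuadraticMap.weightedSumSquares_apply]

lemma polar_Qf (x y : Fin m → ℝ) :
    QuadraticMap.polar (Qf m) x y = -2 * ∑ t, x t * y t := by
  simp only [QuadraticMap.polar, Qf_apply, Pi.add_apply, Finset.mul_sum, ← Finset.sum_neg_distrib,
    ← Finset.sum_sub_distrib]
  exact Finset.sum_congr rfl fun t _ => by ring

lemma IsStructuralSet.ι_mul_self (hψ : IsStructuralSet ψ) (i : Fin m) :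
    ι (Qf m) (ψ i) * ι (Qf m) (ψ i) = -1 := by
  rw [ι_sq_scalar, Qf_apply, hψ i i, if_pos rfl, map_neg, map_one]

lemma IsStructuralSet.ι_mul_ι_add_swap (hψ : IsStructuralSet ψ) (i j : Fin m) :
    ι (Qf m) (ψ i) * ι (Qf m) (ψ j) + ι (Qf m) (ψ j) * ι (Qf m) (ψ i)
      = algebraMap ℝ (Cl m) (if i = j then -2 else 0) := by
  rw [CliffordAlgebra.ι_mul_ι_add_swap, polar_Qf, hψ i j]
  split_ifs <;> simp

lemma IsStructuralSet.ι_mul_ι_of_ne (hψ : IsStructuralSet ψ) {i j : Fin m} (h : i ≠ j) :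
    ι (Qf m) (ψ i) * ι (Qf m) (ψ j) = -(ι (Qf m) (ψ j) * ι (Qf m) (ψ i)) := by
  refine eq_neg_of_add_eq_zero_left ?_
  rw [hψ.ι_mul_ι_add_swap, if_neg h, map_zero]

/-- By symmetry of `b`, `ψⁱψʲ` may be replaced by `(ψⁱψʲ + ψʲψⁱ) / 2 = -δᵢⱼ`. -/
lemma IsStructuralSet.sum_mul_ι_mul_ι (hψ : IsStructuralSet ψ) (b : Fin m → Fin m → Cl m)
    (hb : ∀ i j, b i j = b j i) :
    ∑ i, ∑ j, b i j * (ι (Qf m) (ψ i) * ι (Qf m) (ψ j)) = -∑ i, b i i := by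
  have hswap : ∑ i, ∑ j, b i j * (ι (Qf m) (ψ i) * ι (Qf m) (ψ j))
      = ∑ i, ∑ j, b i j * (ι (Qf m) (ψ j) * ι (Qf m) (ψ i)) := by
    rw [Finset.sum_comm]
    simp only [hb]
  have hpolar : ∀ i j, b i j * (ι (Qf m) (ψ i) * ι (Qf m) (ψ j) + ι (Qf m) (ψ j) * ι (Qf m) (ψ i))
      = (if i = j then -2 else 0 : ℝ) • b i j := by
    intro i j
    rw [hψ.ι_mul_ι_add_swap, ← Algebra.commutes, ← Algebra.smul_def]
  have h2 : (2 : ℝ) • ∑ i, ∑ j, b i j * (ι (Qf m) (ψ i) * ι (Qf m) (ψ j))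
      = (2 : ℝ) • -∑ i, b i i := by
    rw [two_smul]
    nth_rewrite 2 [hswap]
    simp only [← Finset.sum_add_distrib, ← mul_add, hpolar, ite_smul, zero_smul,
      Finset.sum_ite_eq, Finset.mem_univ, if_true, Finset.smul_sum, neg_smul, smul_neg,
      Finset.sum_neg_distrib]
  exact smul_right_injective (Cl m) two_ne_zero h2

end Clifford

section Toggle

variable {α : Type*} [DecidableEq α]

def toggle (i : α) (A : Finset α) : Finset α :=
  if i ∈ A then A.erase i else insert i A

lemma mem_toggle_of_ne {i b : α} (h : b ≠ i) {A : Finset α} : b ∈ toggle i A ↔ b ∈ A := by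
  unfold toggle; split_ifs <;> simp [h]

lemma toggle_toggle (i : α) (A : Finset α) : toggle i (toggle i A) = A := by
  by_cases h : i ∈ A <;> simp [toggle, h, Finset.insert_erase]

lemma toggle_insert_of_ne {i a : α} (h : i ≠ a) (A : Finset α) :
    toggle i (insert a A) = insert a (toggle i A) := by
  by_cases hi : i ∈ A
  · simp [toggle, hi, Finset.erase_insert_of_ne h.symm]
  · simp [toggle, hi, h, Finset.insert_comm]

lemma even_card_toggle_iff (i : α) (A : Finset α) :
    Even (toggle i A).card ↔ ¬ Even A.card := by
  by_cases h : i ∈ A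
  · rw [← Finset.insert_erase h, Finset.card_insert_of_notMem (Finset.notMem_erase i A),
      Nat.even_add_one, not_not, toggle, if_pos (Finset.mem_insert_self _ _),
      Finset.erase_insert (Finset.notMem_erase i A)]
  · rw [toggle, if_neg h, Finset.card_insert_of_notMem h, Nat.even_add_one]

end Toggle

section ProdS

variable {m : ℕ}

lemma prodS_insert_of_forall_lt (ψ : Fin m → (Fin m → ℝ)) {a : Fin m} {A : Finset (Fin m)}
    (h : ∀ b ∈ A, a < b) : prodS ψ (insert a A) = ι (Qf m) (ψ a) * prodS ψ A := by
  rw [prodS, prodS, Finset.sort_insert (· ≤ ·) (fun b hb => (h b hb).le)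
    (fun ha => lt_irrefl a (h a ha)), List.map_cons, List.prod_cons]

lemma exists_sign_ι_mul_prodS (i : Fin m) (A : Finset (Fin m)) :
    ∃ s : ℝ, s * s = 1 ∧ ∀ ψ : Fin m → (Fin m → ℝ), IsStructuralSet ψ →
      ι (Qf m) (ψ i) * prodS ψ A = s • prodS ψ (toggle i A) := by
  induction A using Finset.induction_on_min generalizing i with
  | empty =>
    refine ⟨1, one_mul 1, fun ψ _ => ?_⟩
    rw [one_smul, toggle, if_neg (Finset.notMem_empty i), prodS_insert_of_forall_lt ψ (by simp)]
  | insert a A ha ih =>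
    rcases lt_trichotomy i a with hlt | rfl | hgt
    · have hi : ∀ b ∈ insert a A, i < b := by
        simpa using ⟨hlt, fun b hb => hlt.trans (ha b hb)⟩
      refine ⟨1, one_mul 1, fun ψ _ => ?_⟩
      rw [one_smul, toggle, if_neg fun h => lt_irrefl i (hi i h), prodS_insert_of_forall_lt ψ hi]
    · refine ⟨-1, by norm_num, fun ψ hψ => ?_⟩
      rw [prodS_insert_of_forall_lt ψ ha, ← mul_assoc, hψ.ι_mul_self, neg_one_mul, neg_one_smul,
        toggle, if_pos (Finset.mem_insert_self i A),
        Finset.erase_insert fun h => lt_irrefl i (ha i h)]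
    · obtain ⟨s, hs, h⟩ := ih i
      have ha' : ∀ b ∈ toggle i A, a < b := fun b hb => by
        rcases eq_or_ne b i with rfl | hbi
        · exact hgt
        · exact ha b ((mem_toggle_of_ne hbi).1 hb)
      refine ⟨-s, by rw [neg_mul_neg, hs], fun ψ hψ => ?_⟩
      rw [prodS_insert_of_forall_lt ψ ha, ← mul_assoc, hψ.ι_mul_ι_of_ne hgt.ne', neg_mul,
        mul_assoc, h ψ hψ, mul_smul_comm, ← prodS_insert_of_forall_lt ψ ha',
        ← toggle_insert_of_ne hgt.ne', neg_smul]

lemma ι_mul_sandwich_mul_ι {φ ψ : Fin m → (Fin m → ℝ)} (hφ : IsStructuralSet φ)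
    (hψ : IsStructuralSet ψ) (i : Fin m) (A : Finset (Fin m)) (a : Cl m) :
    ι (Qf m) (φ i) * (prodS φ A * a * reverse (prodS ψ A)) * ι (Qf m) (ψ i)
      = prodS φ (toggle i A) * a * reverse (prodS ψ (toggle i A)) := by
  obtain ⟨s, hs, h⟩ := exists_sign_ι_mul_prodS i A
  have hrev : reverse (prodS ψ A) * ι (Qf m) (ψ i) = s • reverse (prodS ψ (toggle i A)) := by
    rw [← reverse_ι, ← reverse.map_mul, h ψ hψ, map_smul]
  simp only [mul_assoc, hrev]
  rw [← mul_assoc, h φ hφ, smul_mul_assoc, mul_smul_comm, mul_smul_comm, smul_smul, hs, one_smul]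

end ProdS

section SandwichSum

variable {m : ℕ} (φ ψ : Fin m → (Fin m → ℝ))

def sandwichSum (S : Finset (Finset (Fin m))) : Cl m →ₗ[ℝ] Cl m :=
  ∑ A ∈ S, LinearMap.mulLeftRight ℝ (prodS φ A, reverse (prodS ψ A))

lemma sandwichSum_apply (S : Finset (Finset (Fin m))) (a : Cl m) :
    sandwichSum φ ψ S a = ∑ A ∈ S, prodS φ A * a * reverse (prodS ψ A) := by
  simp [sandwichSum, LinearMap.sum_apply]

lemma sum_PsiK_filter (p : ℕ → Prop) [DecidablePred p] (a : Cl m) :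
    ∑ k ∈ (Finset.range (m + 1)).filter p, PsiK φ ψ k a
      = sandwichSum φ ψ (Finset.univ.filter fun A => p A.card) a := by
  have hcard : ∀ A ∈ Finset.univ.filter (fun A : Finset (Fin m) => p A.card),
      A.card ∈ (Finset.range (m + 1)).filter p := by
    intro A hA
    simp only [Finset.mem_filter, Finset.mem_univ, true_and, Finset.mem_range] at hA ⊢
    exact ⟨Nat.lt_succ_of_le (by simpa using Finset.card_le_univ A), hA⟩
  rw [sandwichSum_apply, ← Finset.sum_fiberwise_of_maps_to hcard]
  refine Finset.sum_congr rfl fun k hk => Finset.sum_congr ?_ fun _ _ => rfl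
  ext A
  simp only [Finset.mem_filter, Finset.mem_univ, true_and]
  exact ⟨fun h => ⟨h ▸ (Finset.mem_filter.1 hk).2, h⟩, And.right⟩

lemma PsiPlus_eq_sandwichSum (a : Cl m) :
    PsiPlus φ ψ a = sandwichSum φ ψ (Finset.univ.filter fun A => Even A.card) a :=
  sum_PsiK_filter φ ψ Even a

lemma PsiMinus_eq_sandwichSum (a : Cl m) :
    PsiMinus φ ψ a = sandwichSum φ ψ (Finset.univ.filter fun A => Odd A.card) a :=
  sum_PsiK_filter φ ψ Odd a

variable {φ ψ}

lemma ι_mul_sandwichSum_mul_ι (hφ : IsStructuralSet φ) (hψ : IsStructuralSet ψ) (i : Fin m)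
    {S T : Finset (Finset (Fin m))} (hST : ∀ A, toggle i A ∈ T ↔ A ∈ S) (a : Cl m) :
    ι (Qf m) (φ i) * sandwichSum φ ψ S a * ι (Qf m) (ψ i) = sandwichSum φ ψ T a := by
  rw [sandwichSum_apply, sandwichSum_apply, Finset.mul_sum, Finset.sum_mul]
  refine Finset.sum_nbij' (toggle i) (toggle i) (fun A hA => (hST A).2 hA)
    (fun B hB => (hST _).1 (by rwa [toggle_toggle])) (fun A _ => toggle_toggle i A)
    (fun B _ => toggle_toggle i B) fun A _ => ι_mul_sandwich_mul_ι hφ hψ i A a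

lemma ι_mul_PsiPlus_mul_ι (hφ : IsStructuralSet φ) (hψ : IsStructuralSet ψ) (i : Fin m)
    (a : Cl m) : ι (Qf m) (φ i) * PsiPlus φ ψ a * ι (Qf m) (ψ i) = PsiMinus φ ψ a := by
  rw [PsiPlus_eq_sandwichSum, PsiMinus_eq_sandwichSum]
  refine ι_mul_sandwichSum_mul_ι hφ hψ i (fun A => ?_) a
  simp [← Nat.not_even_iff_odd, even_card_toggle_iff]

lemma ι_mul_PsiMinus_mul_ι (hφ : IsStructuralSet φ) (hψ : IsStructuralSet ψ) (i : Fin m)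
    (a : Cl m) : ι (Qf m) (φ i) * PsiMinus φ ψ a * ι (Qf m) (ψ i) = PsiPlus φ ψ a := by
  rw [PsiPlus_eq_sandwichSum, PsiMinus_eq_sandwichSum]
  refine ι_mul_sandwichSum_mul_ι hφ hψ i (fun A => ?_) a
  simp [← Nat.not_even_iff_odd, even_card_toggle_iff]

end SandwichSum

section Contraction

variable {m : ℕ} {φ ψ : Fin m → (Fin m → ℝ)}

lemma sum_ι_mul_mul_ι_eq_zero (hψ : IsStructuralSet ψ) (T : Cl m → Cl m)
    (T' : Cl m →ₗ[ℝ] Cl m) (hT : ∀ i b, ι (Qf m) (φ i) * T b * ι (Qf m) (ψ i) = T' b)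
    (a : Fin m → Fin m → Cl m) (ha : ∀ i j, a i j = a j i) (htr : ∑ i, a i i = 0) :
    ∑ i, ∑ j, ι (Qf m) (φ i) * T (a i j) * ι (Qf m) (ψ j) = 0 := by
  have hterm : ∀ i j, ι (Qf m) (φ i) * T (a i j) * ι (Qf m) (ψ j)
      = -(T' (a i j) * (ι (Qf m) (ψ i) * ι (Qf m) (ψ j))) := by
    intro i j
    rw [← hT i, mul_assoc _ (ι (Qf m) (ψ i)), ← mul_assoc (ι (Qf m) (ψ i)), hψ.ι_mul_self,
      neg_one_mul, mul_neg, neg_neg]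
  simp only [hterm, Finset.sum_neg_distrib]
  rw [hψ.sum_mul_ι_mul_ι (fun i j => T' (a i j)) fun i j => by rw [ha], neg_neg, ← map_sum, htr,
    map_zero]

end Contraction

lemma pd_pd_comm {m : ℕ} {F : (Fin m → ℝ) → Coef m} {Ω : Set (Fin m → ℝ)} (hΩ : IsOpen Ω)
    (hF : ContDiffOn ℝ 2 F Ω) {x : Fin m → ℝ} (hx : x ∈ Ω) (i j : Fin m) :
    pd i (pd j F) x = pd j (pd i F) x := by
  have hFx : ContDiffAt ℝ 2 F x := hF.contDiffAt (hΩ.mem_nhds hx)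
  have hd : DifferentiableAt ℝ (fderiv ℝ F) x :=
    (hFx.fderiv_right (m := 1) (by norm_num)).differentiableAt one_ne_zero
  have hpd : ∀ v w : Fin m → ℝ,
      fderiv ℝ (fun y => fderiv ℝ F y v) x w = fderiv ℝ (fderiv ℝ F) x w v := fun v w => by
    simp [fderiv_clm_apply hd (differentiableAt_const v)]
  unfold pd
  rw [hpd, hpd]
  exact hFx.isSymmSndFDerivAt (by simp) _ _

theorem harmonic_psiPlusMinus_general {m : ℕ} (φ ψ : Fin m → (Fin m → ℝ))
    (hφ : IsStructuralSet φ) (hψ : IsStructuralSet ψ)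
    (Ω : Set (Fin m → ℝ)) (hΩo : IsOpen Ω)
    (F : (Fin m → ℝ) → Coef m) (hF : ContDiffOn ℝ 2 F Ω)
    (hharm : ∀ x ∈ Ω, lapD F x = 0) :
    (∀ x ∈ Ω, PsiPlus φ ψ (lapD F x) = 0) ∧
    (∀ x ∈ Ω, PsiMinus φ ψ (lapD F x) = 0) ∧
    (∀ x ∈ Ω,
      (∑ i, ∑ j, ι (Qf m) (φ i) * PsiPlus φ ψ (toCl (pd i (pd j F) x)) * ι (Qf m) (ψ j))
        = 0) ∧
    (∀ x ∈ Ω,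
      (∑ i, ∑ j, ι (Qf m) (φ i) * PsiMinus φ ψ (toCl (pd i (pd j F) x)) * ι (Qf m) (ψ j))
        = 0) := by
  have hhess : ∀ x ∈ Ω, ∀ i j, toCl (pd i (pd j F) x) = toCl (pd j (pd i F) x) :=
    fun x hx i j => congrArg toCl (pd_pd_comm hΩo hF hx i j)
  refine ⟨fun x hx => ?_, fun x hx => ?_, fun x hx => ?_, fun x hx => ?_⟩
  · rw [hharm x hx, PsiPlus_eq_sandwichSum, map_zero]
  · rw [hharm x hx, PsiMinus_eq_sandwichSum, map_zero]
  · exact sum_ι_mul_mul_ι_eq_zero hψ _ _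
      (fun i b => (ι_mul_PsiPlus_mul_ι hφ hψ i b).trans (PsiMinus_eq_sandwichSum φ ψ b)) _
      (hhess x hx) (hharm x hx)
  · exact sum_ι_mul_mul_ι_eq_zero hψ _ _
      (fun i b => (ι_mul_PsiMinus_mul_ι hφ hψ i b).trans (PsiPlus_eq_sandwichSum φ ψ b)) _
      (hhess x hx) (hharm x hx)

/-- if `f` is harmonic on a domain `Ω` then `Ψ₊^{φ,ψ}(f)` and
`Ψ₋^{φ,ψ}(f)` are both harmonic and `(φ,ψ)`-inframonogenic on `Ω`. (By linearity
of `Ψ_±`, `Δ(Ψ_± f) = Ψ_±(Δf)` and `φ∂[Ψ_± f]ψ∂ = Σᵢⱼ φⁱ Ψ_±(∂²f/∂xᵢ∂xⱼ) ψʲ`.) -/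
theorem harmonic_psiPlusMinus {m : ℕ} (φ ψ : Fin m → (Fin m → ℝ))
    (hφ : IsStructuralSet φ) (hψ : IsStructuralSet ψ)
    (Ω : Set (Fin m → ℝ)) (hΩo : IsOpen Ω) (hΩc : IsConnected Ω)
    (F : (Fin m → ℝ) → Coef m) (hF : ContDiffOn ℝ 2 F Ω)
    (hharm : ∀ x ∈ Ω, lapD F x = 0) :
    (∀ x ∈ Ω, PsiPlus φ ψ (lapD F x) = 0) ∧
    (∀ x ∈ Ω, PsiMinus φ ψ (lapD F x) = 0) ∧
    (∀ x ∈ Ω,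
      (∑ i, ∑ j, ι (Qf m) (φ i) * PsiPlus φ ψ (toCl (pd i (pd j F) x)) * ι (Qf m) (ψ j))
        = 0) ∧
    (∀ x ∈ Ω,
      (∑ i, ∑ j, ι (Qf m) (φ i) * PsiMinus φ ψ (toCl (pd i (pd j F) x)) * ι (Qf m) (ψ j))
        = 0) :=
  harmonic_psiPlusMinus_general φ ψ hφ hψ Ω hΩo F hF hharm
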